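/- arXiv:1005.2745 — 2 statements merged into one kernel-verified Lean document; each statement's English description precedes it below -/
import Mathlib

section
/- For all complex numbers x, z and every natural number n, the sum over k from 0 to n of C(x−k, n−k)·z^k equals the sum over k from 0 to n of C(x+1, n−k)·(z−1)^k. -/
/-!
Both sides satisfy the recurrence `a (n + 1) = C(x + 1, n + 1) + (z - 1) * a n` with `a 0 = 1`.
For the right-hand side this is just splitting off the `k = 0` term; for the left-hand side,
Pascal's rule `C(x - k, n + 1 - k) + C(x - k, n - k) = C(x - k + 1, n + 1 - k)` turns
`a (n + 1) + a n` into a sum that, reindexed, is `C(x + 1, n + 1) + z * a n`.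
The argument works in any binomial ring once `genBinom` is identified with `Ring.choose`.
-/

/-- The generalized binomial coefficient `C(x, k) = x(x-1)⋯(x-k+1)/k!` for `x : ℂ`. -/
noncomputable def genBinom (x : ℂ) (k : ℕ) : ℂ := (∏ i ∈ Finset.range k, (x - i)) / (Nat.factorial k)

open Finset Polynomial

theorem genBinom_eq_choose (x : ℂ) (k : ℕ) : genBinom x k = Ring.choose x k := by
  rw [genBinom, Ring.choose_eq_smul, ← aeval_eq_smeval, aeval_def, eval₂_eq_eval_map,
    descPochhammer_map, descPochhammer_eval_eq_prod_range, smul_eq_mul, div_eq_inv_mul]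

section BinomialRing

variable {R : Type*} [CommRing R] [BinomialRing R]

theorem sum_choose_sub_mul_pow_succ (x z : R) (n : ℕ) :
    ∑ k ∈ range (n + 2), Ring.choose (x - k) (n + 1 - k) * z ^ k =
      Ring.choose (x + 1) (n + 1) +
        (z - 1) * ∑ k ∈ range (n + 1), Ring.choose (x - k) (n - k) * z ^ k := by
  have pascal : ∀ k ∈ range (n + 1), Ring.choose (x - k) (n + 1 - k) * z ^ k +
      Ring.choose (x - k) (n - k) * z ^ k = Ring.choose (x - k + 1) (n + 1 - k) * z ^ k := by
    intro k hk
    rw [Nat.sub_add_comm (Nat.lt_succ_iff.mp (mem_range.mp hk)), Ring.choose_succ_succ]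
    ring
  have shift : ∑ k ∈ range (n + 2), Ring.choose (x - k + 1) (n + 1 - k) * z ^ k =
      Ring.choose (x + 1) (n + 1) +
        z * ∑ k ∈ range (n + 1), Ring.choose (x - k) (n - k) * z ^ k := by
    rw [sum_range_succ', mul_sum, add_comm]
    simp only [Nat.cast_zero, sub_zero, Nat.sub_zero, pow_zero, mul_one, Nat.cast_succ,
      Nat.add_sub_add_right, sub_add_eq_sub_sub, sub_add_cancel, pow_succ]
    congr 1
    exact sum_congr rfl fun k _ => by ring
  rw [sum_range_succ (fun k => Ring.choose (x - k + 1) (n + 1 - k) * z ^ k) (n + 1),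
    ← sum_congr rfl pascal, sum_add_distrib] at shift
  rw [sum_range_succ]
  simp only [Nat.sub_self, Ring.choose_zero_right] at shift ⊢
  linear_combination shift

theorem sum_choose_sub_mul_pow_eq (x z : R) (n : ℕ) :
    ∑ k ∈ range (n + 1), Ring.choose (x - k) (n - k) * z ^ k =
      ∑ k ∈ range (n + 1), Ring.choose (x + 1) (n - k) * (z - 1) ^ k := by
  induction n with
  | zero => simp
  | succ n ih =>
    rw [sum_choose_sub_mul_pow_succ, ih,
      sum_range_succ' (fun k => Ring.choose (x + 1) (n + 1 - k) * (z - 1) ^ k), mul_sum]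
    simp only [Nat.add_sub_add_right, pow_succ, Nat.sub_zero, pow_zero, mul_one]
    rw [add_comm]
    exact congrArg (· + _) (sum_congr rfl fun k _ => by ring)

end BinomialRing

theorem binom_shift_identity (x z : ℂ) (n : ℕ) :
    ∑ k ∈ Finset.range (n + 1), genBinom (x - k) (n - k) * z ^ k =
      ∑ k ∈ Finset.range (n + 1), genBinom (x + 1) (n - k) * (z - 1) ^ k := by
  simp only [genBinom_eq_choose]
  exact sum_choose_sub_mul_pow_eq x z n
end

section
/- For all complex numbers r, x, y and every natural number m, the sum over k from 0 to m of C(m+r, k)·x^k·y^{m−k} equals the sum over k from 0 to m of C(−r, k)·(−x)^k·(x+y)^{m−k}. -/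
lemma genBinom_zero (z : ℂ) : genBinom z 0 = 1 := by simp [genBinom]

lemma factC_ne (k : ℕ) : ((Nat.factorial k : ℂ)) ≠ 0 :=
  Nat.cast_ne_zero.mpr (Nat.factorial_ne_zero k)

/-- Pascal's rule for generalized binomial coefficients. -/
lemma genBinom_pascal (z : ℂ) (k : ℕ) :
    genBinom (z + 1) (k + 1) = genBinom z (k + 1) + genBinom z k := by
  have h1 : ∏ i ∈ Finset.range (k + 1), (z + 1 - i) =
      (z + 1) * ∏ i ∈ Finset.range k, (z - i) := by
    rw [Finset.prod_range_succ']
    simp only [Nat.cast_zero, sub_zero]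
    rw [mul_comm]
    congr 1
    apply Finset.prod_congr rfl
    intro i _
    push_cast
    ring
  have h2 : ∏ i ∈ Finset.range (k + 1), (z - i) =
      (∏ i ∈ Finset.range k, (z - i)) * (z - k) := Finset.prod_range_succ _ _
  have hf : ((Nat.factorial (k + 1) : ℂ)) = (k + 1) * (Nat.factorial k : ℂ) := by
    rw [Nat.factorial_succ]; push_cast; ring
  have hk1 : ((k : ℂ) + 1) ≠ 0 := Nat.cast_add_one_ne_zero k
  unfold genBinom
  rw [h1, h2, hf]
  field_simp [hk1, factC_ne k]
  ring

/-- The reflection identity. -/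
lemma genBinom_reflect (r : ℂ) (m : ℕ) :
    genBinom ((m : ℂ) + r) (m + 1) = (-1) ^ (m + 1) * genBinom (-r) (m + 1) := by
  have h1 : ∏ i ∈ Finset.range (m + 1), ((m : ℂ) + r - i) =
      ∏ i ∈ Finset.range (m + 1), (r + i) := by
    rw [← Finset.prod_range_reflect (fun i => r + (i : ℂ)) (m + 1)]
    apply Finset.prod_congr rfl
    intro j hj
    have hj' : j ≤ m := Nat.lt_succ_iff.mp (Finset.mem_range.mp hj)
    have : ((m + 1 - 1 - j : ℕ) : ℂ) = (m : ℂ) - j := by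
      simp only [Nat.add_sub_cancel]
      rw [Nat.cast_sub hj']
    rw [this]; ring
  have h2 : ∏ i ∈ Finset.range (m + 1), (-r - i) =
      (-1) ^ (m + 1) * ∏ i ∈ Finset.range (m + 1), (r + i) := by
    have : ∀ i ∈ Finset.range (m + 1), (-r - (i : ℂ)) = -(r + i) := by
      intro i _; ring
    rw [Finset.prod_congr rfl this]
    have : ∀ i ∈ Finset.range (m + 1), -(r + (i : ℂ)) = (-1) * (r + i) := by
      intro i _; ring
    rw [Finset.prod_congr rfl this, Finset.prod_mul_distrib, Finset.prod_const,
      Finset.card_range]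
  unfold genBinom
  rw [h1, h2]
  have hsign : ((-1 : ℂ)) ^ (m + 1) * (-1) ^ (m + 1) = 1 := by
    rw [← pow_add]
    exact Even.neg_one_pow ⟨m + 1, by ring⟩
  calc (∏ i ∈ Finset.range (m + 1), (r + (i : ℂ))) / (Nat.factorial (m + 1) : ℂ)
      = ((-1 : ℂ) ^ (m + 1) * (-1) ^ (m + 1)) *
        ((∏ i ∈ Finset.range (m + 1), (r + (i : ℂ))) / (Nat.factorial (m + 1) : ℂ)) := by
        rw [hsign, one_mul]
    _ = (-1) ^ (m + 1) *
        ((-1) ^ (m + 1) * (∏ i ∈ Finset.range (m + 1), (r + (i : ℂ))) / (Nat.factorial (m + 1) : ℂ)) := by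
        ring

/-- Peeling lemma: sum over range (m+2) with fixed `z`. -/
lemma sum_peel (z u v : ℂ) (m : ℕ) :
    ∑ k ∈ Finset.range (m + 2), genBinom z k * u ^ k * v ^ (m + 1 - k) =
      v * (∑ k ∈ Finset.range (m + 1), genBinom z k * u ^ k * v ^ (m - k)) +
        genBinom z (m + 1) * u ^ (m + 1) := by
  rw [Finset.sum_range_succ]
  simp only [Nat.sub_self, pow_zero, mul_one]
  congr 1
  rw [Finset.mul_sum]
  apply Finset.sum_congr rfl
  intro k hk
  have hk' : k ≤ m := Nat.lt_succ_iff.mp (Finset.mem_range.mp hk)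
  have : m + 1 - k = (m - k) + 1 := by omega
  rw [this, pow_succ]
  ring

theorem gkp_basic_identity (r x y : ℂ) (m : ℕ) :
    ∑ k ∈ Finset.range (m + 1), genBinom (m + r) k * x ^ k * y ^ (m - k) =
      ∑ k ∈ Finset.range (m + 1), genBinom (-r) k * (-x) ^ k * (x + y) ^ (m - k) := by
  induction m with
  | zero => simp [genBinom]
  | succ m ih =>
    -- LHS: decompose using Pascal
    have hz : ((m + 1 : ℕ) : ℂ) + r = ((m : ℂ) + r) + 1 := by push_cast; ring
    have lhs_eq : ∑ k ∈ Finset.range (m + 2), genBinom (((m : ℂ) + r) + 1) k * x ^ k * y ^ (m + 1 - k) =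
        (x + y) * (∑ k ∈ Finset.range (m + 1), genBinom ((m : ℂ) + r) k * x ^ k * y ^ (m - k)) +
          genBinom ((m : ℂ) + r) (m + 1) * x ^ (m + 1) := by
      have split : ∀ k ∈ Finset.range (m + 2),
          genBinom (((m : ℂ) + r) + 1) k * x ^ k * y ^ (m + 1 - k) =
            genBinom ((m : ℂ) + r) k * x ^ k * y ^ (m + 1 - k) +
              (if k = 0 then 0 else genBinom ((m : ℂ) + r) (k - 1) * x ^ k * y ^ (m + 1 - k)) := by
        intro k _
        cases k with
        | zero => simp [genBinom_zero]
        | succ j =>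
          simp only [Nat.succ_ne_zero, if_false, Nat.add_sub_cancel]
          rw [genBinom_pascal]
          ring
      rw [Finset.sum_congr rfl split, Finset.sum_add_distrib]
      rw [sum_peel]
      have second : ∑ k ∈ Finset.range (m + 2),
          (if k = 0 then 0 else genBinom ((m : ℂ) + r) (k - 1) * x ^ k * y ^ (m + 1 - k)) =
          x * ∑ k ∈ Finset.range (m + 1), genBinom ((m : ℂ) + r) k * x ^ k * y ^ (m - k) := by
        rw [Finset.sum_range_succ']
        simp only [if_true, Nat.succ_ne_zero, if_false, Nat.add_sub_cancel, reduceIte]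
        rw [add_zero, Finset.mul_sum]
        apply Finset.sum_congr rfl
        intro k hk
        have hk' : k ≤ m := Nat.lt_succ_iff.mp (Finset.mem_range.mp hk)
        have : m + 1 - (k + 1) = m - k := by omega
        rw [this, pow_succ]
        ring
      rw [second]
      ring
    -- RHS: peel
    have rhs_eq : ∑ k ∈ Finset.range (m + 2), genBinom (-r) k * (-x) ^ k * (x + y) ^ (m + 1 - k) =
        (x + y) * (∑ k ∈ Finset.range (m + 1), genBinom (-r) k * (-x) ^ k * (x + y) ^ (m - k)) +
          genBinom (-r) (m + 1) * (-x) ^ (m + 1) := sum_peel _ _ _ _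
    have cast_eq : ∀ k, genBinom (((m + 1 : ℕ) : ℂ) + r) k = genBinom (((m : ℂ) + r) + 1) k := by
      intro k; rw [hz]
    calc ∑ k ∈ Finset.range (m + 1 + 1), genBinom (((m + 1 : ℕ) : ℂ) + r) k * x ^ k * y ^ (m + 1 - k)
        = ∑ k ∈ Finset.range (m + 2), genBinom (((m : ℂ) + r) + 1) k * x ^ k * y ^ (m + 1 - k) := by
          apply Finset.sum_congr rfl; intro k _; rw [cast_eq]
      _ = (x + y) * (∑ k ∈ Finset.range (m + 1), genBinom ((m : ℂ) + r) k * x ^ k * y ^ (m - k)) +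
          genBinom ((m : ℂ) + r) (m + 1) * x ^ (m + 1) := lhs_eq
      _ = (x + y) * (∑ k ∈ Finset.range (m + 1), genBinom (-r) k * (-x) ^ k * (x + y) ^ (m - k)) +
          genBinom (-r) (m + 1) * (-x) ^ (m + 1) := by
          rw [ih, genBinom_reflect]
          congr 1
          rw [neg_pow]
          ring
      _ = ∑ k ∈ Finset.range (m + 1 + 1), genBinom (-r) k * (-x) ^ k * (x + y) ^ (m + 1 - k) :=
          rhs_eq.symm
end
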